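/- Let G be a finite simple graph with m > 0 edges, and let S and S* be disjoint finite sets of vertices of G with S nonempty, S* nonempty, and CM(S) ≥ 0. If CM(S) > CM(S ∪ S*), then DM(S) > DM(S ∪ S*); that is, for disjoint merges, whenever the classic modularity strictly decreases upon merging the disjoint community S*, the density modularity strictly decreases as well. -/

import Mathlib

open Finset

/-- Number of edges of `G` with both endpoints in `C`. -/
noncomputable def numEdgesIn {V : Type*} [Fintype V] [DecidableEq V]
    (G : SimpleGraph V) [DecidableRel G.Adj] (C : Finset V) : ℕ :=
  (G.edgeFinset.filter fun e => ∀ v ∈ e, v ∈ C).card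

/-- Sum over `C` of the degrees taken in `G`. -/
def degSum {V : Type*} [Fintype V] [DecidableEq V]
    (G : SimpleGraph V) [DecidableRel G.Adj] (C : Finset V) : ℕ :=
  ∑ v ∈ C, G.degree v

/-- Classic modularity. -/
noncomputable def CM {V : Type*} [Fintype V] [DecidableEq V]
    (G : SimpleGraph V) [DecidableRel G.Adj] (C : Finset V) : ℝ :=
  (1 / (2 * (G.edgeFinset.card : ℝ))) *
    (2 * (numEdgesIn G C : ℝ) -
      (degSum G C : ℝ) ^ 2 / (2 * (G.edgeFinset.card : ℝ)))

/-- Density modularity. -/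
noncomputable def DM {V : Type*} [Fintype V] [DecidableEq V]
    (G : SimpleGraph V) [DecidableRel G.Adj] (C : Finset V) : ℝ :=
  (1 / (2 * (C.card : ℝ))) *
    (2 * (numEdgesIn G C : ℝ) -
      (degSum G C : ℝ) ^ 2 / (2 * (G.edgeFinset.card : ℝ)))

/-!
Classic and density modularity share the numerator `2 l_C - d_C² / (2m)` and differ only in the
denominator, `2m` versus `2|C|`. A strict drop of classic modularity is a strict drop of the
numerator; as the numerator of `S` is nonnegative, passing from the denominator `2|S|` to the
larger `2|S ∪ S*|` can only widen the gap.
-/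

noncomputable def modularityNumerator {V : Type*} [Fintype V] [DecidableEq V]
    (G : SimpleGraph V) [DecidableRel G.Adj] (C : Finset V) : ℝ :=
  2 * (numEdgesIn G C : ℝ) - (degSum G C : ℝ) ^ 2 / (2 * (G.edgeFinset.card : ℝ))

section

variable {V : Type*} [Fintype V] [DecidableEq V] (G : SimpleGraph V) [DecidableRel G.Adj]

theorem CM_eq_modularityNumerator_div (C : Finset V) :
    CM G C = modularityNumerator G C / (2 * (G.edgeFinset.card : ℝ)) :=
  one_div_mul_eq_div _ _

theorem DM_eq_modularityNumerator_div (C : Finset V) :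
    DM G C = modularityNumerator G C / (2 * (C.card : ℝ)) :=
  one_div_mul_eq_div _ _

end

theorem cm_strict_decrease_implies_dm_strict_decrease_disjoint_general
    {V : Type*} [Fintype V] [DecidableEq V]
    (G : SimpleGraph V) [DecidableRel G.Adj]
    (S Sstar : Finset V)
    (hm : 0 < G.edgeFinset.card)
    (hS : S.Nonempty)
    (hCM : 0 ≤ CM G S)
    (h : CM G (S ∪ Sstar) < CM G S) :
    DM G (S ∪ Sstar) < DM G S := by
  have h2m : (0 : ℝ) < 2 * (G.edgeFinset.card : ℝ) := by positivity
  simp only [CM_eq_modularityNumerator_div] at hCM h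
  have hlt : modularityNumerator G (S ∪ Sstar) < modularityNumerator G S :=
    (div_lt_div_iff_of_pos_right h2m).1 h
  have hnonneg : 0 ≤ modularityNumerator G S := by
    simpa using (le_div_iff₀ h2m).1 hCM
  have hcard : (S.card : ℝ) ≤ ((S ∪ Sstar).card : ℝ) := by
    exact_mod_cast card_le_card subset_union_left
  rw [DM_eq_modularityNumerator_div, DM_eq_modularityNumerator_div]
  exact div_lt_div₀ hlt (by linarith) hnonneg (by simpa using hS.card_pos)

/-- For disjoint merges, whenever the classic modularity strictly
decreases upon merging the disjoint community `S*`, the density modularity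
strictly decreases as well. -/
theorem cm_strict_decrease_implies_dm_strict_decrease_disjoint
    {V : Type*} [Fintype V] [DecidableEq V]
    (G : SimpleGraph V) [DecidableRel G.Adj]
    (S Sstar : Finset V)
    (hm : 0 < G.edgeFinset.card)
    (hdisj : Disjoint S Sstar)
    (hS : S.Nonempty) (hSstar : Sstar.Nonempty)
    (hCM : 0 ≤ CM G S)
    (h : CM G (S ∪ Sstar) < CM G S) :
    DM G (S ∪ Sstar) < DM G S :=
  cm_strict_decrease_implies_dm_strict_decrease_disjoint_general G S Sstar hm hS hCM h
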